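/- arXiv:2211.07196 — 7 statements merged into one kernel-verified Lean document; each statement's English description precedes it below -/
import Mathlib

section
/- Let n ≥ 2 be an integer, let a < b be real numbers, let f ∈ 𝒟ⁿ([a,b]), and let c ∈ [a,b]. Define g : [a,b] → ℝ by g(x) = (f(x) − f(c))/(x − c) for x ≠ c and g(c) = f′(c). Then g ∈ 𝒟^{n−1}([a,b]), and for every x ∈ (a,b) there exists ξ ∈ (a,b) such that g^{(n−1)}(x) = f^{(n)}(ξ)/n. -/
open Set Polynomial Nat MeasureTheory ENNReal

/-- `fd 0` belongs to `𝒟ⁿ([a,b])`, with `fd k` its `k`-th derivative: `fd k` exists and is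
continuous on `[a,b]` for `0 ≤ k ≤ n-1`, and `fd n` is the derivative of `fd (n-1)` on `(a,b)`. -/
def IsDn (n : ℕ) (a b : ℝ) (fd : ℕ → ℝ → ℝ) : Prop :=
  (∀ k, k + 1 < n → ∀ x ∈ Set.Icc a b, HasDerivWithinAt (fd k) (fd (k + 1) x) (Set.Icc a b) x) ∧
  ContinuousOn (fd (n - 1)) (Set.Icc a b) ∧
  (∀ x ∈ Set.Ioo a b, HasDerivAt (fd (n - 1)) (fd n x) x)

/-- `m_n(f) = inf_{a<t<b} |f^{(n)}(t)|`. -/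
noncomputable def mIoo (n : ℕ) (a b : ℝ) (fd : ℕ → ℝ → ℝ) : ℝ :=
  sInf ((fun t => |fd n t|) '' Set.Ioo a b)

/-- `‖f‖_{p,[a,b]}` for `0 < p < ∞`. -/
noncomputable def Lp (p a b : ℝ) (f : ℝ → ℝ) : ℝ :=
  (∫ t in a..b, |f t| ^ p) ^ (1 / p)

/-- `‖f‖_{∞,[a,b]}`. -/
noncomputable def Lsup (a b : ℝ) (f : ℝ → ℝ) : ℝ :=
  sSup ((fun t => |f t|) '' Set.Icc a b)

/-- `‖f‖_{p,[a,b]}` for `0 < p ≤ ∞`. -/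
noncomputable def pnorm (p : ℝ≥0∞) (a b : ℝ) (f : ℝ → ℝ) : ℝ :=
  if p = ⊤ then Lsup a b f else Lp p.toReal a b f

/-- `D**(n,p,[a,b])`, `p` finite. -/
noncomputable def Dstar (n : ℕ) (p a b : ℝ) : ℝ :=
  sInf { c | ∃ Q : Polynomial ℝ, Q.Monic ∧ Q.natDegree = n ∧ c = Lp p a b (fun x => Q.eval x) }

/-- `D**(n,∞,[a,b])`. -/
noncomputable def DstarInf (n : ℕ) (a b : ℝ) : ℝ :=
  sInf { c | ∃ Q : Polynomial ℝ, Q.Monic ∧ Q.natDegree = n ∧ c = Lsup a b (fun x => Q.eval x) }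

/-- `C(n,p)`, `p` finite. -/
noncomputable def Cnp (n : ℕ) (p : ℝ) : ℝ :=
  sSup { c | ∃ fd : ℕ → ℝ → ℝ, IsDn n 0 1 fd ∧ (∃ x ∈ Set.Icc (0:ℝ) 1, fd 0 x ≠ 0) ∧
    c = mIoo n 0 1 fd / Lp p 0 1 (fd 0) }

/-- `C(n,∞)`. -/
noncomputable def CnpInf (n : ℕ) : ℝ :=
  sSup { c | ∃ fd : ℕ → ℝ → ℝ, IsDn n 0 1 fd ∧ (∃ x ∈ Set.Icc (0:ℝ) 1, fd 0 x ≠ 0) ∧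
    c = mIoo n 0 1 fd / Lsup 0 1 (fd 0) }

/-!
Write `g^{(k)}(x)` as the moment `∫₀¹ tᵏ f^{(k+1)}(c + t(x - c)) dt`. For `x ≠ c` a change of
variables turns it into `(x - c)^{-(k+1)} ∫_c^x (s - c)ᵏ f^{(k+1)}(s) ds`, whose derivative is
`(f^{(k+1)}(x) - (k+1) g^{(k)}(x)) / (x - c)`; an integration by parts identifies this with the
next moment whenever `f^{(k+2)}` is continuous. At `x = c` the derivative `f^{(k+2)}(c)/(k+2)` only
needs differentiability of `f^{(k+1)}` at `c`. At the top order `f^{(n)}` need not be continuous,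
and `ξ` comes instead from Cauchy's mean value theorem applied to the numerator
`(x - c)^{n-1} f^{(n-1)}(x) - (n-1) ∫_c^x (s - c)^{n-2} f^{(n-1)}(s) ds` and the denominator
`(x - c)ⁿ`, which both vanish at `c`.
-/

open Filter Topology

theorem exists_ratio_hasDerivAt_eq_ratio_slope_of_ne {f f' g g' : ℝ → ℝ} {a b : ℝ} (hab : a ≠ b)
    (hfc : ContinuousOn f (uIcc a b))
    (hff' : ∀ x ∈ Ioo (min a b) (max a b), HasDerivAt f (f' x) x)
    (hgc : ContinuousOn g (uIcc a b))
    (hgg' : ∀ x ∈ Ioo (min a b) (max a b), HasDerivAt g (g' x) x) :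
    ∃ c ∈ Ioo (min a b) (max a b), (g b - g a) * f' c = (f b - f a) * g' c := by
  rcases hab.lt_or_gt with h | h
  · rw [uIcc_of_le h.le] at hfc hgc
    rw [min_eq_left h.le, max_eq_right h.le] at hff' hgg' ⊢
    exact exists_ratio_hasDerivAt_eq_ratio_slope f f' h hfc hff' g g' hgc hgg'
  · rw [uIcc_of_ge h.le] at hfc hgc
    rw [min_eq_right h.le, max_eq_left h.le] at hff' hgg' ⊢
    obtain ⟨c, hc, e⟩ := exists_ratio_hasDerivAt_eq_ratio_slope f f' h hfc hff' g g' hgc hgg'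
    exact ⟨c, hc, by linear_combination -e⟩

noncomputable def segmentMoment (k : ℕ) (F : ℝ → ℝ) (c x : ℝ) : ℝ :=
  ∫ t in (0:ℝ)..1, t ^ k * F (c + t * (x - c))

section SegmentMoment

variable {k : ℕ} {F F' G : ℝ → ℝ} {c x L : ℝ} {s : Set ℝ}

theorem segmentMoment_self : segmentMoment k F c c = F c / (k + 1) := by
  simp [segmentMoment, integral_pow, div_eq_inv_mul]

theorem segmentMoment_eq_div (hx : x ≠ c) :
    segmentMoment k F c x = (∫ y in c..x, (y - c) ^ k * F y) / (x - c) ^ (k + 1) := by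
  have hxc : x - c ≠ 0 := sub_ne_zero.2 hx
  rw [eq_div_iff (pow_ne_zero _ hxc)]
  calc segmentMoment k F c x * (x - c) ^ (k + 1)
      = (x - c) * ∫ t in (0:ℝ)..1, ((x - c) * t + c - c) ^ k * F ((x - c) * t + c) := by
        rw [segmentMoment, ← intervalIntegral.integral_mul_const,
          ← intervalIntegral.integral_const_mul]
        congr 1 with t
        rw [show (x - c) * t + c = c + t * (x - c) by ring, add_sub_cancel_left, mul_pow]
        ring
    _ = ∫ y in c..x, (y - c) ^ k * F y := by
        rw [intervalIntegral.integral_comp_mul_add (fun y => (y - c) ^ k * F y) hxc]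
        simp [hxc]

theorem segmentMoment_congr (hs : Convex ℝ s) (hc : c ∈ s) (h : EqOn F G s) :
    EqOn (segmentMoment k F c) (segmentMoment k G c) s := fun x hx =>
  intervalIntegral.integral_congr fun t ht => by
    rw [uIcc_of_le zero_le_one] at ht
    have hFG := h (hs.add_smul_sub_mem hc hx ht)
    simp only [smul_eq_mul] at hFG
    rw [hFG]

theorem continuous_segmentMoment (hF : Continuous F) : Continuous (segmentMoment k F c) :=
  intervalIntegral.continuous_parametric_intervalIntegral_of_continuous' (by fun_prop) 0 1

theorem hasDerivAt_segmentMoment (hF : Continuous F) (hx : x ≠ c) :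
    HasDerivAt (segmentMoment k F c)
      ((F x - (k + 1) * segmentMoment k F c x) / (x - c)) x := by
  have hxc : x - c ≠ 0 := sub_ne_zero.2 hx
  have hcont : Continuous fun y => (y - c) ^ k * F y := by fun_prop
  have hH : HasDerivAt (fun y => ∫ z in c..y, (z - c) ^ k * F z) ((x - c) ^ k * F x) x :=
    (hcont.integral_hasStrictDerivAt c x).hasDerivAt
  have hP : HasDerivAt (fun y => (y - c) ^ (k + 1)) ((k + 1 : ℕ) * (x - c) ^ k) x := by
    simpa using ((hasDerivAt_id' x).sub_const c).fun_pow (k + 1)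
  have hEq : segmentMoment k F c =ᶠ[𝓝 x]
      fun y => (∫ z in c..y, (z - c) ^ k * F z) / (y - c) ^ (k + 1) :=
    (eventually_ne_nhds hx).mono fun y hy => segmentMoment_eq_div hy
  refine ((hH.div hP (pow_ne_zero _ hxc)).congr_of_eventuallyEq hEq).congr_deriv ?_
  rw [segmentMoment_eq_div hx]
  field_simp
  push_cast
  ring

theorem hasDerivWithinAt_segmentMoment_self (hF : Continuous F) (hs : Convex ℝ s) (hc : c ∈ s)
    (hL : HasDerivWithinAt F L s c) :
    HasDerivWithinAt (segmentMoment k F c) (L / (k + 2)) s c := by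
  rw [hasDerivWithinAt_iff_isLittleO, Asymptotics.isLittleO_iff] at hL ⊢
  intro ε hε
  obtain ⟨δ, hδ, hr⟩ := Metric.mem_nhdsWithin_iff.1 (hL hε)
  filter_upwards [self_mem_nhdsWithin, nhdsWithin_le_nhds (Metric.ball_mem_nhds c hδ)]
    with x hxs hxδ
  have hlin : ∫ t in (0:ℝ)..1, t ^ k * ((c + t * (x - c) - c) * L) = (x - c) * (L / (k + 2)) := by
    simp only [add_sub_cancel_left, show ∀ t : ℝ, t ^ k * (t * (x - c) * L) =
      (x - c) * L * t ^ (k + 1) from fun t => by ring, intervalIntegral.integral_const_mul,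
      integral_pow]
    push_cast
    ring
  have hrem : segmentMoment k F c x - segmentMoment k F c c - (x - c) • (L / (k + 2)) =
      ∫ t in (0:ℝ)..1, t ^ k * (F (c + t * (x - c)) - F c - (c + t * (x - c) - c) * L) := by
    rw [smul_eq_mul, ← hlin, segmentMoment, segmentMoment, ← intervalIntegral.integral_sub,
      ← intervalIntegral.integral_sub]
    · congr 1 with t
      simp only [sub_self, mul_zero, add_zero]
      ring
    all_goals exact Continuous.intervalIntegrable (by fun_prop) _ _
  rw [hrem]
  refine (intervalIntegral.norm_integral_le_of_norm_le_const (C := ε * ‖x - c‖)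
    fun t ht => ?_).trans_eq (by simp)
  rw [uIoc_of_le zero_le_one] at ht
  have hts : c + t * (x - c) ∈ s := by
    simpa using hs.add_smul_sub_mem hc hxs (Ioc_subset_Icc_self ht)
  have hdist : ‖c + t * (x - c) - c‖ ≤ ‖x - c‖ := by
    rw [add_sub_cancel_left, norm_mul, Real.norm_of_nonneg ht.1.le]
    exact mul_le_of_le_one_left (norm_nonneg _) ht.2
  have hyδ : dist (c + t * (x - c)) c < δ :=
    (dist_eq_norm _ _).trans_le hdist |>.trans_lt (dist_eq_norm x c ▸ hxδ)
  have hrt : ‖F (c + t * (x - c)) - F c - (c + t * (x - c) - c) * L‖ ≤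
      ε * ‖c + t * (x - c) - c‖ := hr ⟨hyδ, hts⟩
  calc ‖t ^ k * (F (c + t * (x - c)) - F c - (c + t * (x - c) - c) * L)‖
      ≤ 1 * (ε * ‖x - c‖) := by
        rw [norm_mul, norm_pow, Real.norm_of_nonneg ht.1.le]
        gcongr
        · exact pow_le_one₀ ht.1.le ht.2
        · exact hrt.trans (by gcongr)
    _ = ε * ‖x - c‖ := one_mul _

theorem exists_segmentMoment_slope_eq (hF : Continuous F)
    (hF' : ∀ y ∈ Ioo (min c x) (max c x), HasDerivAt F (F' y) y) (hx : x ≠ c) :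
    ∃ ξ ∈ Ioo (min c x) (max c x),
      (F x - (k + 1) * segmentMoment k F c x) / (x - c) = F' ξ / (k + 2) := by
  have hxc : x - c ≠ 0 := sub_ne_zero.2 hx
  set H : ℝ → ℝ := fun y => ∫ z in c..y, (z - c) ^ k * F z
  have hH : ∀ y, HasDerivAt H ((y - c) ^ k * F y) y := fun y =>
    ((by fun_prop : Continuous fun z => (z - c) ^ k * F z).integral_hasStrictDerivAt c y).hasDerivAt
  have hP : ∀ (j : ℕ) y, HasDerivAt (fun y => (y - c) ^ (j + 1)) ((j + 1 : ℕ) * (y - c) ^ j) y :=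
    fun j y => by simpa using ((hasDerivAt_id' y).sub_const c).fun_pow (j + 1)
  set N : ℝ → ℝ := fun y => (y - c) ^ (k + 1) * F y - (k + 1) * H y
  have hN : ∀ y ∈ Ioo (min c x) (max c x), HasDerivAt N ((y - c) ^ (k + 1) * F' y) y :=
    fun y hy => (((hP k y).mul (hF' y hy)).sub ((hH y).const_mul _)).congr_deriv
      (by push_cast; ring)
  obtain ⟨ξ, hξ, e⟩ := exists_ratio_hasDerivAt_eq_ratio_slope_of_ne hx.symm
    (by fun_prop) hN (by fun_prop) fun y _ => hP (k + 1) y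
  refine ⟨ξ, hξ, ?_⟩
  have hξc : (ξ - c) ^ (k + 1) ≠ 0 := by
    refine pow_ne_zero _ (sub_ne_zero.2 fun h => ?_)
    rcases le_total c x with h' | h' <;> simp_all
  have hHx : H x = (x - c) ^ (k + 1) * segmentMoment k F c x := by
    rw [segmentMoment_eq_div hx, mul_div_cancel₀ _ (pow_ne_zero _ hxc)]
  simp only [N, hHx, intervalIntegral.integral_same, H, sub_self, zero_pow (succ_ne_zero _),
    zero_mul, mul_zero, sub_zero] at e
  push_cast at e
  rw [div_eq_div_iff hxc (by positivity)]
  apply mul_left_cancel₀ (mul_ne_zero hξc (pow_ne_zero (k + 1) hxc))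
  linear_combination -e

theorem Convex.mapsTo_add_mul_sub (hs : Convex ℝ s) (hc : c ∈ s) (hx : x ∈ s) :
    MapsTo (fun t => c + t * (x - c)) (uIcc 0 1) s := fun t ht => by
  rw [uIcc_of_le zero_le_one] at ht
  simpa using hs.add_smul_sub_mem hc hx ht

theorem hasDerivWithinAt_comp_segment (hs : Convex ℝ s)
    (hF : ∀ y ∈ s, HasDerivWithinAt F (F' y) s y) (hc : c ∈ s) (hx : x ∈ s) {t : ℝ}
    (ht : t ∈ uIcc 0 1) :
    HasDerivWithinAt (fun t => F (c + t * (x - c))) (F' (c + t * (x - c)) * (x - c))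
      (uIcc 0 1) t :=
  (hF _ (hs.mapsTo_add_mul_sub hc hx ht)).comp t
    (by simpa using ((hasDerivAt_id' t).mul_const (x - c)).const_add c |>.hasDerivWithinAt)
    (hs.mapsTo_add_mul_sub hc hx)

theorem sub_mul_segmentMoment_zero (hs : Convex ℝ s)
    (hF : ∀ y ∈ s, HasDerivWithinAt F (F' y) s y) (hF' : ContinuousOn F' s) (hc : c ∈ s)
    (hx : x ∈ s) : (x - c) * segmentMoment 0 F' c x = F x - F c := by
  have hv := fun t ht => hasDerivWithinAt_comp_segment hs hF hc hx (t := t) ht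
  rw [uIcc_of_le zero_le_one] at hv
  have hFTC := intervalIntegral.integral_eq_sub_of_hasDerivAt_of_le zero_le_one
    (fun t ht => (hv t ht).continuousWithinAt)
    (fun t ht => (hv t (Ioo_subset_Icc_self ht)).hasDerivAt (Icc_mem_nhds ht.1 ht.2))
    ((hF'.comp (by fun_prop) (hs.mapsTo_add_mul_sub hc hx)).intervalIntegrable.mul_const (x - c))
  simp only [segmentMoment, pow_zero, one_mul, ← intervalIntegral.integral_const_mul]
  simpa [mul_comm] using hFTC

theorem sub_mul_segmentMoment_succ (hs : Convex ℝ s)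
    (hF : ∀ y ∈ s, HasDerivWithinAt F (F' y) s y) (hF' : ContinuousOn F' s) (hc : c ∈ s)
    (hx : x ∈ s) :
    (x - c) * segmentMoment (k + 1) F' c x = F x - (k + 1) * segmentMoment k F c x := by
  have hIBP := intervalIntegral.integral_mul_deriv_eq_deriv_mul_of_hasDerivWithinAt
    (u := fun t => t ^ (k + 1)) (u' := fun t => (k + 1) * t ^ k)
    (fun t _ => by simpa using (hasDerivAt_pow (k + 1) t).hasDerivWithinAt)
    (fun t ht => hasDerivWithinAt_comp_segment hs hF hc hx ht)
    (Continuous.intervalIntegrable (by fun_prop) _ _)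
    ((hF'.comp (by fun_prop) (hs.mapsTo_add_mul_sub hc hx)).intervalIntegrable.mul_const (x - c))
  simp only [segmentMoment, ← intervalIntegral.integral_const_mul]
  simpa [mul_comm, mul_assoc, mul_left_comm] using hIBP

end SegmentMoment

theorem ContinuousOn.exists_continuous_eqOn_Icc {F : ℝ → ℝ} {a b : ℝ} (hab : a ≤ b)
    (hF : ContinuousOn F (Icc a b)) : ∃ G : ℝ → ℝ, Continuous G ∧ EqOn G F (Icc a b) :=
  ⟨IccExtend hab ((Icc a b).domRestrict F),
    (continuousOn_iff_continuous_domRestrict.1 hF).Icc_extend',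
    fun _ hx => IccExtend_of_mem hab _ hx⟩

section Interval

variable {k : ℕ} {F F' : ℝ → ℝ} {a b c x : ℝ}

theorem continuousOn_segmentMoment (hF : ContinuousOn F (Icc a b)) (hc : c ∈ Icc a b) :
    ContinuousOn (segmentMoment k F c) (Icc a b) := by
  obtain ⟨G, hG, hGF⟩ := hF.exists_continuous_eqOn_Icc (hc.1.trans hc.2)
  exact (continuous_segmentMoment hG).continuousOn.congr
    (segmentMoment_congr (convex_Icc a b) hc hGF.symm)

theorem hasDerivWithinAt_segmentMoment
    (hF : ∀ y ∈ Icc a b, HasDerivWithinAt F (F' y) (Icc a b) y) (hF' : ContinuousOn F' (Icc a b))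
    (hc : c ∈ Icc a b) (hx : x ∈ Icc a b) :
    HasDerivWithinAt (segmentMoment k F c) (segmentMoment (k + 1) F' c x) (Icc a b) x := by
  obtain ⟨G, hG, hGF⟩ := ContinuousOn.exists_continuous_eqOn_Icc (hc.1.trans hc.2)
    fun y hy => (hF y hy).continuousWithinAt
  have hsm := segmentMoment_congr (k := k) (convex_Icc a b) hc hGF.symm
  refine HasDerivWithinAt.congr ?_ hsm (hsm hx)
  rcases eq_or_ne x c with rfl | hxc
  · have hGx := (hF x hx).congr hGF (hGF hx)
    refine (hasDerivWithinAt_segmentMoment_self hG (convex_Icc a b) hc hGx).congr_deriv ?_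
    rw [segmentMoment_self]
    push_cast
    ring
  · refine (hasDerivAt_segmentMoment hG hxc).hasDerivWithinAt.congr_deriv ?_
    rw [hGF hx, ← hsm hx, div_eq_iff (sub_ne_zero.2 hxc), mul_comm _ (x - c),
      sub_mul_segmentMoment_succ (convex_Icc a b) hF hF' hc hx]

theorem exists_hasDerivAt_segmentMoment (hF : ContinuousOn F (Icc a b))
    (hF' : ∀ y ∈ Ioo a b, HasDerivAt F (F' y) y) (hc : c ∈ Icc a b) (hx : x ∈ Ioo a b) :
    ∃ ξ ∈ Ioo a b, HasDerivAt (segmentMoment k F c) (F' ξ / (k + 2)) x := by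
  obtain ⟨G, hG, hGF⟩ := hF.exists_continuous_eqOn_Icc (hc.1.trans hc.2)
  have hGF' : ∀ y ∈ Ioo a b, HasDerivAt G (F' y) y := fun y hy =>
    (hF' y hy).congr_of_eventuallyEq (eventuallyEq_of_mem (Icc_mem_nhds hy.1 hy.2) hGF)
  have hsm : segmentMoment k F c =ᶠ[𝓝 x] segmentMoment k G c :=
    eventuallyEq_of_mem (Icc_mem_nhds hx.1 hx.2) (segmentMoment_congr (convex_Icc a b) hc hGF.symm)
  suffices ∃ ξ ∈ Ioo a b, HasDerivAt (segmentMoment k G c) (F' ξ / (k + 2)) x from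
    this.imp fun _ ⟨hξ, h⟩ => ⟨hξ, h.congr_of_eventuallyEq hsm⟩
  rcases eq_or_ne x c with rfl | hxc
  · exact ⟨x, hx, hasDerivWithinAt_univ.1 <| hasDerivWithinAt_segmentMoment_self hG convex_univ
      (mem_univ x) (hGF' x hx).hasDerivWithinAt⟩
  · have hsub : Ioo (min c x) (max c x) ⊆ Ioo a b :=
      Ioo_subset_Ioo (le_min hc.1 hx.1.le) (max_le hc.2 hx.2.le)
    obtain ⟨ξ, hξ, e⟩ := exists_segmentMoment_slope_eq (k := k) hG
      (fun y hy => hGF' y (hsub hy)) hxc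
    exact ⟨ξ, hsub hξ, e ▸ hasDerivAt_segmentMoment hG hxc⟩

end Interval

namespace IsDn

variable {n k m : ℕ} {a b c x : ℝ} {fd gd : ℕ → ℝ → ℝ}

theorem congr (hf : IsDn n a b fd) (hIcc : ∀ k ≤ n - 1, EqOn (gd k) (fd k) (Icc a b))
    (hIoo : EqOn (gd n) (fd n) (Ioo a b)) : IsDn n a b gd := by
  obtain ⟨hder, hcont, htop⟩ := hf
  refine ⟨fun k hk x hx => ?_, hcont.congr (hIcc _ le_rfl), fun x hx => ?_⟩
  · rw [hIcc (k + 1) (by omega) hx]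
    exact (hder k hk x hx).congr (hIcc k (by omega)) (hIcc k (by omega) hx)
  · rw [hIoo hx]
    exact (htop x hx).congr_of_eventuallyEq
      (eventuallyEq_of_mem (Icc_mem_nhds hx.1 hx.2) (hIcc _ le_rfl))

theorem continuousOn (hf : IsDn n a b fd) (hk : k ≤ n - 1) : ContinuousOn (fd k) (Icc a b) := by
  rcases hk.eq_or_lt with rfl | hk
  · exact hf.2.1
  · exact fun x hx => (hf.1 k (by omega) x hx).continuousWithinAt

theorem exists_hasDerivAt_segmentMoment_top (hf : IsDn (m + 2) a b fd) (hc : c ∈ Icc a b)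
    (hx : x ∈ Ioo a b) : ∃ ξ ∈ Ioo a b,
      HasDerivAt (segmentMoment m (fd (m + 1)) c) (fd (m + 2) ξ / (m + 2 : ℕ)) x := by
  push_cast
  exact exists_hasDerivAt_segmentMoment (hf.continuousOn le_rfl) hf.2.2 hc hx

end IsDn

/-- Candidates for `g^{(k)}`, `k ≤ m + 1`, when `n = m + 2`: moments below the top order, a plain
`deriv` at the top order, where `fd (m + 2)` need not be integrable. -/
noncomputable def slopeDerivs (fd : ℕ → ℝ → ℝ) (c : ℝ) (m k : ℕ) : ℝ → ℝ :=
  if k = m + 1 then deriv (segmentMoment m (fd (m + 1)) c) else segmentMoment k (fd (k + 1)) c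

section SlopeDerivs

variable {m : ℕ} {a b c : ℝ} {fd : ℕ → ℝ → ℝ}

theorem isDn_slopeDerivs (hf : IsDn (m + 2) a b fd) (hc : c ∈ Icc a b) :
    IsDn (m + 1) a b (slopeDerivs fd c m) := by
  refine ⟨fun k hk x hx => ?_, ?_, fun x hx => ?_⟩
  · simp only [slopeDerivs, if_neg (show k ≠ m + 1 by omega),
      if_neg (show k + 1 ≠ m + 1 by omega)]
    exact hasDerivWithinAt_segmentMoment (hf.1 (k + 1) (by omega)) (hf.continuousOn (by omega))
      hc hx
  · simpa [slopeDerivs] using continuousOn_segmentMoment (hf.continuousOn le_rfl) hc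
  · obtain ⟨ξ, -, h⟩ := hf.exists_hasDerivAt_segmentMoment_top hc hx
    simpa [slopeDerivs, h.deriv] using h

theorem eqOn_slopeDerivs_zero (hf : IsDn (m + 2) a b fd) (hc : c ∈ Icc a b) :
    EqOn (fun x => if x = c then fd 1 c else (fd 0 x - fd 0 c) / (x - c))
      (slopeDerivs fd c m 0) (Icc a b) := fun x hx => by
  simp only [slopeDerivs, if_neg (succ_ne_zero m).symm]
  split_ifs with hxc
  · simp [hxc, segmentMoment_self]
  · rw [div_eq_iff (sub_ne_zero.2 hxc), mul_comm, sub_mul_segmentMoment_zero (convex_Icc a b)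
      (hf.1 0 (by omega)) (hf.continuousOn (by omega)) hc hx]

end SlopeDerivs

theorem stmt0_general (n : ℕ) (hn : 2 ≤ n) (a b : ℝ)
    (fd : ℕ → ℝ → ℝ) (hf : IsDn n a b fd) (c : ℝ) (hc : c ∈ Set.Icc a b) :
    ∃ gd : ℕ → ℝ → ℝ,
      (∀ x, gd 0 x = if x = c then fd 1 c else (fd 0 x - fd 0 c) / (x - c)) ∧
      IsDn (n - 1) a b gd ∧
      (∀ x ∈ Set.Ioo a b, ∃ ξ ∈ Set.Ioo a b, gd (n - 1) x = fd n ξ / n) := by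
  obtain ⟨m, rfl⟩ : ∃ m, n = m + 2 := ⟨n - 2, by omega⟩
  refine ⟨Function.update (slopeDerivs fd c m) 0
      fun x => if x = c then fd 1 c else (fd 0 x - fd 0 c) / (x - c),
    fun x => by simp, (isDn_slopeDerivs hf hc).congr ?_ fun x _ => by simp, fun x hx => ?_⟩
  · rintro (_ | k) _ x hx
    · simpa using eqOn_slopeDerivs_zero hf hc hx
    · simp
  · obtain ⟨ξ, hξ, h⟩ := hf.exists_hasDerivAt_segmentMoment_top hc hx
    exact ⟨ξ, hξ, by simp [slopeDerivs, h.deriv]⟩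

/-- Division lemma: if `f ∈ 𝒟ⁿ([a,b])` (`n ≥ 2`) and `c ∈ [a,b]`, then
`g(x) = (f(x) - f(c))/(x - c)` (with `g(c) = f'(c)`) belongs to `𝒟^{n-1}([a,b])`, and for every
`x ∈ (a,b)` there is `ξ ∈ (a,b)` with `g^{(n-1)}(x) = f^{(n)}(ξ)/n`. -/
theorem stmt0 (n : ℕ) (hn : 2 ≤ n) (a b : ℝ) (hab : a < b)
    (fd : ℕ → ℝ → ℝ) (hf : IsDn n a b fd) (c : ℝ) (hc : c ∈ Set.Icc a b) :
    ∃ gd : ℕ → ℝ → ℝ,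
      (∀ x, gd 0 x = if x = c then fd 1 c else (fd 0 x - fd 0 c) / (x - c)) ∧
      IsDn (n - 1) a b gd ∧
      (∀ x ∈ Set.Ioo a b, ∃ ξ ∈ Set.Ioo a b, gd (n - 1) x = fd n ξ / n) :=
  stmt0_general n hn a b fd hf c hc
end

section
/- Let n ≥ 1 be an integer, let a < b be real numbers, and let f ∈ 𝒟ⁿ([a,b]) satisfy f^{(n)}(t) ≥ n! for every t ∈ (a,b). If Q is a monic real polynomial of degree n such that |f(x)| = |Q(x)| for every x ∈ [a,b], then f(x) = Q(x) for every x ∈ [a,b]. -/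
open Set Polynomial Nat MeasureTheory ENNReal

/-!
If `f ≠ Q` somewhere on `[a,b]`, then `f = -Q` there, and by continuity `f = -Q` on a nonempty
open subset of `(a,b)`. Differentiating `n` times on that open set gives `f⁽ⁿ⁾ = -n! < 0`,
contradicting `f⁽ⁿ⁾ ≥ n!`.
-/

open Filter Topology

theorem Polynomial.Monic.iterate_derivative_natDegree {R : Type*} [CommSemiring R] {Q : R[X]}
    (hQ : Q.Monic) : derivative^[Q.natDegree] Q = C (Q.natDegree ! : R) := by
  rw [← factorial_smul_hasseDeriv, LinearMap.smul_apply, hasseDeriv_natDegree_eq_C,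
    hQ.leadingCoeff, C_1, nsmul_one, C_eq_natCast]

theorem nonempty_Ioo_inter_preimage_of_continuousWithinAt {X : Type*} [TopologicalSpace X]
    {g : ℝ → X} {a b x : ℝ} {t : Set X} (hab : a < b) (hx : x ∈ Icc a b)
    (hg : ContinuousWithinAt g (Icc a b) x) (ht : IsOpen t) (hxt : g x ∈ t) :
    (Ioo a b ∩ g ⁻¹' t).Nonempty := by
  have : (𝓝[Ioo a b] x).NeBot := by
    rw [← mem_closure_iff_nhdsWithin_neBot, closure_Ioo hab.ne]
    exact hx
  have hev : ∀ᶠ y in 𝓝[Ioo a b] x, g y ∈ t :=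
    nhdsWithin_mono x Ioo_subset_Icc_self (hg (ht.mem_nhds hxt))
  exact (eventually_mem_nhdsWithin.and hev).exists

namespace IsDn

variable {n : ℕ} {a b : ℝ} {fd : ℕ → ℝ → ℝ}

theorem continuousOn_zero (hf : IsDn n a b fd) : ContinuousOn (fd 0) (Icc a b) := by
  rcases lt_or_ge 1 n with hn | hn
  · exact fun x hx => (hf.1 0 hn x hx).continuousWithinAt
  · simpa [Nat.sub_eq_zero_of_le hn] using hf.2.1

theorem hasDerivAt {k : ℕ} (hf : IsDn n a b fd) (hk : k < n) {x : ℝ} (hx : x ∈ Ioo a b) :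
    HasDerivAt (fd k) (fd (k + 1) x) x := by
  rcases lt_or_eq_of_le (Nat.succ_le_of_lt hk) with hk | rfl
  · exact (hf.1 k hk x (Ioo_subset_Icc_self hx)).hasDerivAt (Icc_mem_nhds hx.1 hx.2)
  · simpa using hf.2.2 x hx

theorem eqOn_iterate_derivative (hf : IsDn n a b fd) {U : Set ℝ} (hU : IsOpen U)
    (hUab : U ⊆ Ioo a b) {P : ℝ[X]} (hP : EqOn (fd 0) (fun x => P.eval x) U) :
    ∀ k ≤ n, EqOn (fd k) (fun x => (derivative^[k] P).eval x) U := by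
  intro k hk
  induction k with
  | zero => exact hP
  | succ k ih =>
    intro x hx
    have hfk : fd k =ᶠ[𝓝 x] fun y => (derivative^[k] P).eval y :=
      eventually_of_mem (hU.mem_nhds hx) (ih (by omega))
    have hderiv := (hf.hasDerivAt (by omega) (hUab hx)).congr_of_eventuallyEq hfk.symm
    rw [Function.iterate_succ_apply']
    exact hderiv.unique (Polynomial.hasDerivAt _ x)

end IsDn

theorem stmt2_general (n : ℕ) (a b : ℝ) (hab : a < b)
    (fd : ℕ → ℝ → ℝ) (hf : IsDn n a b fd)
    (hderiv : ∀ t ∈ Set.Ioo a b, (n ! : ℝ) ≤ fd n t)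
    (Q : Polynomial ℝ) (hQmonic : Q.Monic) (hQdeg : Q.natDegree = n)
    (habs : ∀ x ∈ Set.Icc a b, |fd 0 x| = |Q.eval x|) :
    ∀ x ∈ Set.Icc a b, fd 0 x = Q.eval x := by
  intro x hx
  by_contra hne
  set g : ℝ → ℝ := fun y => fd 0 y - Q.eval y
  have hg : ContinuousOn g (Icc a b) := hf.continuousOn_zero.sub Q.continuous.continuousOn
  set U := Ioo a b ∩ g ⁻¹' {0}ᶜ
  have hU : IsOpen U :=
    (hg.mono Ioo_subset_Icc_self).isOpen_inter_preimage isOpen_Ioo isOpen_compl_singleton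
  obtain ⟨y, hy⟩ : U.Nonempty := nonempty_Ioo_inter_preimage_of_continuousWithinAt hab hx
    (hg x hx) isOpen_compl_singleton (sub_ne_zero.2 hne)
  have hneg : EqOn (fd 0) (fun z => (-Q).eval z) U := fun z hz => by
    simpa using (abs_eq_abs.1 (habs z (Ioo_subset_Icc_self hz.1))).resolve_left
      (sub_ne_zero.1 hz.2)
  have hy_n := hf.eqOn_iterate_derivative hU inter_subset_left hneg n le_rfl hy
  subst hQdeg
  beta_reduce at hy_n
  rw [iterate_derivative_neg, eval_neg, hQmonic.iterate_derivative_natDegree, eval_C] at hy_n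
  have hpos : (0 : ℝ) < Q.natDegree ! := by positivity
  linarith [hderiv y hy.1]

/-- If `f ∈ 𝒟ⁿ([a,b])` satisfies `f^{(n)}(t) ≥ n!` on `(a,b)` and `|f| = |Q|` on `[a,b]` for a
monic polynomial `Q` of degree `n`, then `f = Q` on `[a,b]`. -/
theorem stmt2 (n : ℕ) (hn : 1 ≤ n) (a b : ℝ) (hab : a < b)
    (fd : ℕ → ℝ → ℝ) (hf : IsDn n a b fd)
    (hderiv : ∀ t ∈ Set.Ioo a b, (n ! : ℝ) ≤ fd n t)
    (Q : Polynomial ℝ) (hQmonic : Q.Monic) (hQdeg : Q.natDegree = n)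
    (habs : ∀ x ∈ Set.Icc a b, |fd 0 x| = |Q.eval x|) :
    ∀ x ∈ Set.Icc a b, fd 0 x = Q.eval x :=
  stmt2_general n a b hab fd hf hderiv Q hQmonic hQdeg habs
end

section
/- Let n ≥ 1 be an integer, let a < b be real numbers, and let 0 < p ≤ ∞. Then there exists a monic real polynomial Q of degree n, all of whose roots are real and lie in [a,b], such that ‖Q‖_{p,[a,b]} = D**(n,p,[a,b]); that is, the infimum defining D**(n,p,[a,b]) is attained by a monic polynomial with all its roots in [a,b]. -/
open Set Polynomial Nat MeasureTheory ENNReal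

/-!
Over `ℂ` a monic real polynomial of degree `n` factors as `∏ (x - zᵢ)`. For `x ∈ [a,b]`, moving
`zᵢ` to the projection of `Re zᵢ` onto `[a,b]` does not increase `|x - zᵢ|`, so every monic
polynomial is dominated pointwise on `[a,b]` by one with all roots in `[a,b]`. The infimum is
therefore the minimum of a continuous function of the root vector over the compact cube `[a,b]ⁿ`.
-/

theorem Multiset.exists_fin_univ_map_eq {α : Type*} {n : ℕ} (m : Multiset α)
    (hm : Multiset.card m = n) : ∃ z : Fin n → α, Finset.univ.val.map z = m := by
  have hlen : m.toList.length = n := by simp [hm]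
  refine ⟨fun i => m.toList.get (Fin.cast hlen.symm i), ?_⟩
  rw [Fin.univ_val_map, ← List.ofFn_congr hlen, List.ofFn_get, Multiset.coe_toList]

theorem Polynomial.Monic.exists_abs_eval_eq_prod_norm {Q : ℝ[X]} {n : ℕ} (hQ : Q.Monic)
    (hd : Q.natDegree = n) : ∃ z : Fin n → ℂ, ∀ x : ℝ, |Q.eval x| = ∏ i, ‖(x : ℂ) - z i‖ := by
  obtain ⟨z, hz⟩ := (Q.aroots ℂ).exists_fin_univ_map_eq
    ((IsAlgClosed.card_roots_map_eq_natDegree_from_simpleRing _ Q).trans hd)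
  refine ⟨z, fun x => ?_⟩
  have hsplit :=
    (IsAlgClosed.splits (Q.map (algebraMap ℝ ℂ))).aeval_eq_prod_aroots_of_monic hQ (x : ℂ)
  rw [← hz, Multiset.map_map] at hsplit
  rw [← norm_prod, ← Finset.prod_map_val, ← Function.comp_def, ← hsplit,
    show aeval (x : ℂ) Q = Q.eval x from aeval_algebraMap_apply_eq_algebraMap_eval x Q,
    Complex.norm_real, Real.norm_eq_abs]

theorem abs_sub_projIcc_le {a b x : ℝ} (h : a ≤ b) (hx : x ∈ Icc a b) (c : ℝ) :
    |x - projIcc a b h c| ≤ |x - c| := by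
  simpa [projIcc_of_mem h hx] using abs_projIcc_sub_projIcc h (c := x) (d := c)

theorem Polynomial.Monic.exists_mem_Icc_abs_prod_le_abs_eval {Q : ℝ[X]} {n : ℕ} (hQ : Q.Monic)
    (hd : Q.natDegree = n) {a b : ℝ} (hab : a ≤ b) :
    ∃ r : Fin n → ℝ, (∀ i, r i ∈ Icc a b) ∧
      ∀ x ∈ Icc a b, |∏ i, (x - r i)| ≤ |Q.eval x| := by
  obtain ⟨z, hz⟩ := hQ.exists_abs_eval_eq_prod_norm hd
  refine ⟨fun i => projIcc a b hab (z i).re, fun i => Subtype.mem _, fun x hx => ?_⟩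
  rw [Finset.abs_prod, hz]
  gcongr with i
  calc |x - projIcc a b hab (z i).re| ≤ |x - (z i).re| := abs_sub_projIcc_le hab hx _
    _ = |((x : ℂ) - z i).re| := by simp
    _ ≤ ‖(x : ℂ) - z i‖ := Complex.abs_re_le_norm _

theorem pnorm_le_pnorm_of_abs_le (p : ℝ≥0∞) {a b : ℝ} (hab : a ≤ b) {f g : ℝ → ℝ}
    (hf : Continuous f) (hg : Continuous g) (h : ∀ x ∈ Icc a b, |f x| ≤ |g x|) :
    pnorm p a b f ≤ pnorm p a b g := by
  unfold pnorm
  split_ifs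
  · have hbdd : BddAbove ((fun t => |g t|) '' Icc a b) :=
      isCompact_Icc.bddAbove_image hg.abs.continuousOn
    refine Real.sSup_le ?_ (Real.sSup_nonneg ?_)
    · rintro _ ⟨t, ht, rfl⟩
      exact (h t ht).trans (le_csSup hbdd ⟨t, ht, rfl⟩)
    · rintro _ ⟨t, -, rfl⟩
      exact abs_nonneg _
  · have hq : 0 ≤ p.toReal := ENNReal.toReal_nonneg
    refine Real.rpow_le_rpow (intervalIntegral.integral_nonneg hab fun t _ => by positivity)
      (intervalIntegral.integral_mono_on hab ?_ ?_ fun t ht => ?_) (by positivity)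
    · exact (hf.abs.rpow_const fun _ => Or.inr hq).intervalIntegrable _ _
    · exact (hg.abs.rpow_const fun _ => Or.inr hq).intervalIntegrable _ _
    · exact Real.rpow_le_rpow (abs_nonneg _) (h t ht) hq

section ParametricNorm

variable {X : Type*} [TopologicalSpace X] {F : X → ℝ → ℝ}

theorem continuous_Lp_of_continuous_uncurry {p : ℝ} (hp : 0 ≤ p) (a b : ℝ)
    (hF : Continuous (Function.uncurry F)) : Continuous fun r => Lp p a b (F r) :=
  (intervalIntegral.continuous_parametric_intervalIntegral_of_continuous'
    (hF.abs.rpow_const fun _ => Or.inr hp) a b).rpow_const fun _ => Or.inr (by positivity)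

theorem continuous_Lsup_of_continuous_uncurry (a b : ℝ) (hF : Continuous (Function.uncurry F)) :
    Continuous fun r => Lsup a b (F r) := by
  let G : C(X × Icc a b, ℝ) := ⟨fun q => F q.1 q.2, by fun_prop⟩
  have hG : ∀ r, Lsup a b (F r) = ‖G.curry r‖ := fun r => by
    rw [ContinuousMap.norm_eq_iSup_norm, Lsup, image_eq_range]
    rfl
  simpa only [hG] using G.curry.continuous.norm

theorem continuous_pnorm_of_continuous_uncurry (p : ℝ≥0∞) (a b : ℝ)
    (hF : Continuous (Function.uncurry F)) : Continuous fun r => pnorm p a b (F r) := by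
  unfold pnorm
  split_ifs
  · exact continuous_Lsup_of_continuous_uncurry a b hF
  · exact continuous_Lp_of_continuous_uncurry ENNReal.toReal_nonneg a b hF

end ParametricNorm

theorem stmt5_general (n : ℕ) (a b : ℝ) (hab : a < b) (p : ℝ≥0∞) :
    ∃ r : Fin n → ℝ, (∀ i, r i ∈ Set.Icc a b) ∧
      pnorm p a b (fun x => ∏ i, (x - r i)) =
        sInf { c | ∃ Q : Polynomial ℝ, Q.Monic ∧ Q.natDegree = n ∧
          c = pnorm p a b (fun x => Q.eval x) } := by
  have hF : Continuous fun r : Fin n → ℝ => pnorm p a b (fun x => ∏ i, (x - r i)) :=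
    continuous_pnorm_of_continuous_uncurry p a b (by fun_prop)
  obtain ⟨r₀, hr₀, hmin⟩ := (isCompact_univ_pi fun _ => isCompact_Icc).exists_isMinOn
    ⟨fun _ => a, fun _ _ => left_mem_Icc.2 hab.le⟩ hF.continuousOn
  refine ⟨r₀, fun i => hr₀ i trivial, (IsLeast.csInf_eq ⟨?_, ?_⟩).symm⟩
  · exact ⟨∏ i, (X - C (r₀ i)), monic_prod_X_sub_C _ _, by simp, by simp [eval_prod]⟩
  · rintro _ ⟨Q, hQ, hd, rfl⟩
    obtain ⟨r, hr, hle⟩ := hQ.exists_mem_Icc_abs_prod_le_abs_eval hd hab.le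
    exact (hmin fun i _ => hr i).trans
      (pnorm_le_pnorm_of_abs_le p hab.le (by fun_prop) Q.continuous hle)

/-- For `0 < p ≤ ∞`, the infimum `D**(n,p,[a,b])` is attained by a monic polynomial of degree `n`
with all of its roots in `[a,b]`. -/
theorem stmt5 (n : ℕ) (hn : 1 ≤ n) (a b : ℝ) (hab : a < b) (p : ℝ≥0∞) (hp : 0 < p) :
    ∃ r : Fin n → ℝ, (∀ i, r i ∈ Set.Icc a b) ∧
      pnorm p a b (fun x => ∏ i, (x - r i)) =
        sInf { c | ∃ Q : Polynomial ℝ, Q.Monic ∧ Q.natDegree = n ∧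
          c = pnorm p a b (fun x => Q.eval x) } :=
  stmt5_general n a b hab p
end

section
/- Let 0 < p < ∞. Then C(1,p) = 2(p+1)^{1/p}; that is, every f ∈ 𝒟¹([0,1]) that is not identically zero satisfies inf_{0<t<1} |f′(t)| ≤ 2(p+1)^{1/p} · (∫_0^1 |f(t)|^p dt)^{1/p}, and 2(p+1)^{1/p} is the smallest constant with this property. -/
open Set Polynomial Nat MeasureTheory ENNReal

/-!
If `m = inf |f'| > 0`, Darboux's theorem forces `f'` to keep one sign, so `f` or `-f` grows at
rate at least `m`; hence `|f t| ≥ m |t - c|` for a zero `c` of `f` (or an endpoint). By convexity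
of `x ↦ x ^ (p + 1)`, `∫₀¹ |t - c| ^ p` is smallest at `c = 1/2`, which gives
`‖f‖_p ≥ m / (2 (p + 1) ^ (1 / p))`, with equality for `f t = t - 1/2`.
-/

open Real intervalIntegral

lemma exists_mul_abs_sub_le_abs {f : ℝ → ℝ} {a b m : ℝ} (hab : a ≤ b)
    (hf : ContinuousOn f (Icc a b))
    (hgrowth : ∀ s ∈ Icc a b, ∀ t ∈ Icc a b, s ≤ t → m * (t - s) ≤ f t - f s) :
    ∃ c ∈ Icc a b, ∀ t ∈ Icc a b, m * |t - c| ≤ |f t| := by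
  have right : ∀ c ∈ Icc a b, 0 ≤ f c → ∀ t ∈ Icc a b, c ≤ t → m * |t - c| ≤ |f t| := by
    intro c hc hfc t ht hct
    rw [abs_of_nonneg (sub_nonneg.2 hct)]
    linarith [hgrowth c hc t ht hct, le_abs_self (f t)]
  have left : ∀ c ∈ Icc a b, f c ≤ 0 → ∀ t ∈ Icc a b, t ≤ c → m * |t - c| ≤ |f t| := by
    intro c hc hfc t ht htc
    rw [abs_sub_comm, abs_of_nonneg (sub_nonneg.2 htc)]
    linarith [hgrowth t ht c hc htc, neg_le_abs (f t)]
  by_cases ha : 0 ≤ f a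
  · exact ⟨a, left_mem_Icc.2 hab, fun t ht => right a (left_mem_Icc.2 hab) ha t ht ht.1⟩
  by_cases hb : f b ≤ 0
  · exact ⟨b, right_mem_Icc.2 hab, fun t ht => left b (right_mem_Icc.2 hab) hb t ht ht.2⟩
  obtain ⟨c, hc, hfc⟩ := intermediate_value_Icc hab hf ⟨(not_le.1 ha).le, (not_le.1 hb).le⟩
  refine ⟨c, hc, fun t ht => ?_⟩
  rcases le_total c t with hct | htc
  · exact right c hc hfc.ge t ht hct
  · exact left c hc hfc.le t ht htc

lemma forall_le_or_forall_le_neg_of_le_abs_deriv {f f' : ℝ → ℝ} {a b m : ℝ} (hm : 0 < m)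
    (hf : ∀ x ∈ Ioo a b, HasDerivAt f (f' x) x) (hf' : ∀ x ∈ Ioo a b, m ≤ |f' x|) :
    (∀ x ∈ Ioo a b, m ≤ f' x) ∨ (∀ x ∈ Ioo a b, m ≤ -f' x) := by
  have hne : ∀ x ∈ Ioo a b, f' x ≠ 0 := fun x hx h0 => by
    have := hf' x hx
    rw [h0, abs_zero] at this
    linarith
  rcases hasDerivWithinAt_forall_lt_or_forall_gt_of_forall_ne (convex_Ioo a b)
    (fun x hx => (hf x hx).hasDerivWithinAt) hne with hneg | hpos
  · exact Or.inr fun x hx => by simpa [abs_of_neg (hneg x hx)] using hf' x hx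
  · exact Or.inl fun x hx => by simpa [abs_of_pos (hpos x hx)] using hf' x hx

lemma exists_mul_abs_sub_le_abs_of_le_abs_deriv {f f' : ℝ → ℝ} {a b m : ℝ} (hab : a ≤ b)
    (hm : 0 < m) (hf : ContinuousOn f (Icc a b)) (hderiv : ∀ x ∈ Ioo a b, HasDerivAt f (f' x) x)
    (hf' : ∀ x ∈ Ioo a b, m ≤ |f' x|) :
    ∃ c ∈ Icc a b, ∀ t ∈ Icc a b, m * |t - c| ≤ |f t| := by
  have growth : ∀ g g' : ℝ → ℝ, ContinuousOn g (Icc a b) →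
      (∀ x ∈ Ioo a b, HasDerivAt g (g' x) x) → (∀ x ∈ Ioo a b, m ≤ g' x) →
      ∀ s ∈ Icc a b, ∀ t ∈ Icc a b, s ≤ t → m * (t - s) ≤ g t - g s := by
    intro g g' hg hgd hg'
    refine (convex_Icc a b).mul_sub_le_image_sub_of_le_deriv hg ?_ ?_ <;> rw [interior_Icc]
    · exact fun x hx => (hgd x hx).differentiableAt.differentiableWithinAt
    · exact fun x hx => (hgd x hx).deriv ▸ hg' x hx
  rcases forall_le_or_forall_le_neg_of_le_abs_deriv hm hderiv hf' with hpos | hneg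
  · exact exists_mul_abs_sub_le_abs hab hf (growth f f' hf hderiv hpos)
  · obtain ⟨c, hc, hbound⟩ := exists_mul_abs_sub_le_abs hab hf.neg
      (growth (-f) (-f') hf.neg (fun x hx => (hderiv x hx).neg) hneg)
    exact ⟨c, hc, fun t ht => by simpa using hbound t ht⟩

lemma integral_abs_sub_rpow {p c : ℝ} (hp : 0 ≤ p) (hc : c ∈ Icc (0 : ℝ) 1) :
    ∫ t in (0 : ℝ)..1, |t - c| ^ p = (c ^ (p + 1) + (1 - c) ^ (p + 1)) / (p + 1) := by
  have hcont : Continuous fun t : ℝ => |t - c| ^ p := by fun_prop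
  have hleft : ∫ t in (0 : ℝ)..c, |t - c| ^ p = c ^ (p + 1) / (p + 1) := by
    rw [integral_congr (g := fun t => (c - t) ^ p) fun t ht => by
        rw [uIcc_of_le hc.1] at ht
        simp only [abs_sub_comm t, abs_of_nonneg (sub_nonneg.2 ht.2)],
      integral_comp_sub_left (fun u => u ^ p) c, sub_self, sub_zero,
      integral_rpow (Or.inl (by linarith)), zero_rpow (by positivity), sub_zero]
  have hright : ∫ t in c..1, |t - c| ^ p = (1 - c) ^ (p + 1) / (p + 1) := by
    rw [integral_congr (g := fun t => (t - c) ^ p) fun t ht => by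
        rw [uIcc_of_le hc.2] at ht
        simp only [abs_of_nonneg (sub_nonneg.2 ht.1)],
      integral_comp_sub_right (fun u => u ^ p) c, sub_self,
      integral_rpow (Or.inl (by linarith)), zero_rpow (by positivity), sub_zero]
  rw [← integral_add_adjacent_intervals (hcont.intervalIntegrable 0 c)
    (hcont.intervalIntegrable c 1), hleft, hright, add_div]

lemma inv_two_rpow_le_rpow_add_rpow {p c : ℝ} (hp : 0 ≤ p) (hc : c ∈ Icc (0 : ℝ) 1) :
    (2⁻¹ : ℝ) ^ p ≤ c ^ (p + 1) + (1 - c) ^ (p + 1) := by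
  have h := (convexOn_rpow (by linarith : (1 : ℝ) ≤ p + 1)).2 (mem_Ici.2 hc.1)
    (mem_Ici.2 (sub_nonneg.2 hc.2)) (by norm_num : (0 : ℝ) ≤ 2⁻¹) (by norm_num : (0 : ℝ) ≤ 2⁻¹)
    (by norm_num)
  simp only [smul_eq_mul] at h
  rw [← mul_add, show c + (1 - c) = 1 by ring, mul_one, Real.rpow_add (by norm_num),
    Real.rpow_one] at h
  linarith

lemma inv_two_rpow_div_le_integral_abs_sub_rpow {p c : ℝ} (hp : 0 ≤ p) (hc : c ∈ Icc (0 : ℝ) 1) :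
    (2⁻¹ : ℝ) ^ p / (p + 1) ≤ ∫ t in (0 : ℝ)..1, |t - c| ^ p := by
  rw [integral_abs_sub_rpow hp hc]
  gcongr
  exact inv_two_rpow_le_rpow_add_rpow hp hc

lemma integral_abs_sub_inv_two_rpow {p : ℝ} (hp : 0 ≤ p) :
    ∫ t in (0 : ℝ)..1, |t - 2⁻¹| ^ p = (2⁻¹ : ℝ) ^ p / (p + 1) := by
  rw [integral_abs_sub_rpow hp ⟨by norm_num, by norm_num⟩, show (1 : ℝ) - 2⁻¹ = 2⁻¹ by norm_num,
    Real.rpow_add (by norm_num), Real.rpow_one]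
  ring

lemma inv_two_rpow_div_rpow_one_div {p : ℝ} (hp : 0 < p) :
    ((2⁻¹ : ℝ) ^ p / (p + 1)) ^ (1 / p) = (2 * (p + 1) ^ (1 / p))⁻¹ := by
  rw [one_div, div_rpow (by positivity) (by linarith), rpow_rpow_inv (by norm_num) hp.ne',
    mul_inv, div_eq_mul_inv]

lemma Lp_nonneg {p a b : ℝ} {f : ℝ → ℝ} (hab : a ≤ b) : 0 ≤ Lp p a b f :=
  rpow_nonneg (integral_nonneg hab fun _ _ => rpow_nonneg (abs_nonneg _) _) _

lemma le_mul_Lp_of_le_abs_deriv {p m : ℝ} {f f' : ℝ → ℝ} (hp : 0 < p) (hm : 0 < m)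
    (hf : ContinuousOn f (Icc 0 1)) (hderiv : ∀ x ∈ Ioo (0 : ℝ) 1, HasDerivAt f (f' x) x)
    (hf' : ∀ x ∈ Ioo (0 : ℝ) 1, m ≤ |f' x|) :
    m ≤ 2 * (p + 1) ^ (1 / p) * Lp p 0 1 f := by
  obtain ⟨c, hc, hbound⟩ :=
    exists_mul_abs_sub_le_abs_of_le_abs_deriv zero_le_one hm hf hderiv hf'
  have hintegral : m ^ p * ((2⁻¹ : ℝ) ^ p / (p + 1)) ≤ ∫ t in (0 : ℝ)..1, |f t| ^ p := by
    calc m ^ p * ((2⁻¹ : ℝ) ^ p / (p + 1))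
        ≤ m ^ p * ∫ t in (0 : ℝ)..1, |t - c| ^ p := by
          gcongr
          exact inv_two_rpow_div_le_integral_abs_sub_rpow hp.le hc
      _ = ∫ t in (0 : ℝ)..1, (m * |t - c|) ^ p := by
          rw [← intervalIntegral.integral_const_mul]
          exact integral_congr fun t _ => (mul_rpow hm.le (abs_nonneg _)).symm
      _ ≤ ∫ t in (0 : ℝ)..1, |f t| ^ p := by
          have hcont : Continuous fun t => (m * |t - c|) ^ p := by fun_prop (disch := exact hp.le)
          refine integral_mono_on zero_le_one (hcont.intervalIntegrable 0 1) ?_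
            fun t ht => rpow_le_rpow (by positivity) (hbound t ht) hp.le
          exact (hf.abs.rpow_const fun _ _ => Or.inr hp.le).intervalIntegrable_of_Icc zero_le_one
  calc m = 2 * (p + 1) ^ (1 / p) * (m ^ p * ((2⁻¹ : ℝ) ^ p / (p + 1))) ^ (1 / p) := by
        rw [mul_rpow (by positivity) (by positivity), inv_two_rpow_div_rpow_one_div hp, one_div,
          rpow_rpow_inv hm.le hp.ne']
        field_simp
    _ ≤ 2 * (p + 1) ^ (1 / p) * Lp p 0 1 f := by
        unfold _root_.Lp
        gcongr

lemma mIoo_le_mul_Lp {p : ℝ} (hp : 0 < p) {fd : ℕ → ℝ → ℝ} (hfd : IsDn 1 0 1 fd) :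
    mIoo 1 0 1 fd ≤ 2 * (p + 1) ^ (1 / p) * Lp p 0 1 (fd 0) := by
  obtain ⟨-, hcont, hderiv⟩ := hfd
  rcases le_or_gt (mIoo 1 0 1 fd) 0 with hm | hm
  · exact hm.trans (mul_nonneg (by positivity) (Lp_nonneg zero_le_one))
  refine le_mul_Lp_of_le_abs_deriv hp hm hcont hderiv fun x hx => ?_
  exact csInf_le ⟨0, by rintro _ ⟨t, -, rfl⟩; exact abs_nonneg _⟩ (mem_image_of_mem _ hx)

lemma isDn_one_of_hasDerivAt {a b : ℝ} {f f' : ℝ → ℝ} (hf : ∀ x, HasDerivAt f (f' x) x) :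
    IsDn 1 a b (fun k => if k = 0 then f else f') :=
  ⟨fun k hk => absurd hk (by omega), fun x _ => (hf x).continuousAt.continuousWithinAt,
    fun x _ => hf x⟩

lemma mIoo_const_deriv {a b c : ℝ} (hab : a < b) (f : ℝ → ℝ) :
    mIoo 1 a b (fun k => if k = 0 then f else fun _ => c) = |c| := by
  simp only [mIoo, one_ne_zero, if_false, (nonempty_Ioo.2 hab).image_const, csInf_singleton]

/-- `C(1,p) = 2(p+1)^{1/p}` for `0 < p < ∞`: every not-identically-zero `f ∈ 𝒟¹([0,1])`
satisfies `inf_{0<t<1} |f'(t)| ≤ 2(p+1)^{1/p} ‖f‖_p`, and this constant is smallest. -/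
theorem stmt6 (p : ℝ) (hp : 0 < p) :
    (∀ fd : ℕ → ℝ → ℝ, IsDn 1 0 1 fd → (∃ x ∈ Set.Icc (0:ℝ) 1, fd 0 x ≠ 0) →
      mIoo 1 0 1 fd ≤ 2 * (p + 1) ^ (1 / p) * Lp p 0 1 (fd 0)) ∧
    (∀ C : ℝ, (∀ fd : ℕ → ℝ → ℝ, IsDn 1 0 1 fd → (∃ x ∈ Set.Icc (0:ℝ) 1, fd 0 x ≠ 0) →
        mIoo 1 0 1 fd ≤ C * Lp p 0 1 (fd 0)) →
      2 * (p + 1) ^ (1 / p) ≤ C) := by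
  refine ⟨fun fd hfd _ => mIoo_le_mul_Lp hp hfd, fun C hC => ?_⟩
  have hextremal := hC (fun k => if k = 0 then fun t => t - 2⁻¹ else fun _ => 1)
    (isDn_one_of_hasDerivAt fun x => (hasDerivAt_id x).sub_const _)
    ⟨0, left_mem_Icc.2 zero_le_one, by norm_num⟩
  have hLp : Lp p 0 1 (fun t => t - 2⁻¹) = (2 * (p + 1) ^ (1 / p))⁻¹ := by
    rw [_root_.Lp, integral_abs_sub_inv_two_rpow hp.le, inv_two_rpow_div_rpow_one_div hp]
  simp only [mIoo_const_deriv zero_lt_one, abs_one, if_true, hLp] at hextremal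
  rwa [← div_eq_mul_inv, one_le_div (by positivity)] at hextremal
end

section
/- Let n ≥ 1 be an integer, and let P be a monic real polynomial of degree n. Then max_{x∈[−1,1]} |P(x)| ≥ 2^{1−n}. -/
open Set Polynomial Nat MeasureTheory ENNReal

/-!
Rescale `P` by its maximum `M` on `[-1, 1]`: the Chebyshev extremal property
`Polynomial.Chebyshev.coeff_le_of_forall_abs_le_one` bounds the leading coefficient `1 / M`
of `P / M` by that of `T_n`, namely `2 ^ (n - 1)`.
-/

theorem Polynomial.exists_mem_Icc_eval_ne_zero {P : ℝ[X]} (hP : P ≠ 0) {a b : ℝ} (hab : a < b) :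
    ∃ x ∈ Icc a b, P.eval x ≠ 0 := by
  by_contra! h
  exact hP <| P.eq_zero_of_infinite_isRoot <| (Icc_infinite hab).mono h

theorem Polynomial.Chebyshev.coeff_le_mul_of_forall_abs_le {n : ℕ} {P : ℝ[X]} {M : ℝ}
    (hPdeg : P.degree ≤ n) (hM : 0 < M) (hPbnd : ∀ x ∈ Icc (-1) 1, |P.eval x| ≤ M) :
    P.coeff n ≤ M * 2 ^ (n - 1) := by
  have hscaled : (M⁻¹ • P).coeff n ≤ 2 ^ (n - 1) := by
    refine coeff_le_of_forall_abs_le_one ((degree_smul_le _ _).trans hPdeg) fun x hx => ?_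
    rw [eval_smul, smul_eq_mul, abs_mul, abs_inv, abs_of_pos hM, inv_mul_le_one₀ hM]
    exact hPbnd x hx
  rwa [coeff_smul, smul_eq_mul, inv_mul_le_iff₀ hM] at hscaled

theorem Polynomial.Monic.two_zpow_le_of_forall_abs_le {n : ℕ} (hn : 1 ≤ n) {P : ℝ[X]}
    (hP : P.Monic) (hdeg : P.natDegree = n) {M : ℝ} (hM : 0 < M)
    (hPbnd : ∀ x ∈ Icc (-1) 1, |P.eval x| ≤ M) :
    (2 : ℝ) ^ (1 - (n : ℤ)) ≤ M := by
  have hcoeff := Chebyshev.coeff_le_mul_of_forall_abs_le (hdeg ▸ degree_le_natDegree) hM hPbnd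
  rw [← hdeg, hP.coeff_natDegree, hdeg] at hcoeff
  have hexp : 1 - (n : ℤ) = -((n - 1 : ℕ) : ℤ) := by omega
  rwa [hexp, zpow_neg, zpow_natCast, inv_le_iff_one_le_mul₀ (by positivity)]

/-- Every monic polynomial of degree `n ≥ 1` satisfies `max_{x ∈ [-1,1]} |P(x)| ≥ 2^{1-n}`. -/
theorem stmt7 (n : ℕ) (hn : 1 ≤ n) (P : Polynomial ℝ) (hP : P.Monic) (hdeg : P.natDegree = n) :
    (2:ℝ) ^ (1 - (n:ℤ)) ≤ sSup ((fun x => |P.eval x|) '' Set.Icc (-1:ℝ) 1) := by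
  have hbdd : BddAbove ((fun x => |P.eval x|) '' Icc (-1 : ℝ) 1) :=
    isCompact_Icc.bddAbove_image (by fun_prop)
  have hle : ∀ x ∈ Icc (-1 : ℝ) 1, |P.eval x| ≤ sSup ((fun x => |P.eval x|) '' Icc (-1 : ℝ) 1) :=
    fun x hx => le_csSup hbdd ⟨x, hx, rfl⟩
  obtain ⟨x, hx, hPx⟩ := P.exists_mem_Icc_eval_ne_zero hP.ne_zero (by norm_num : (-1 : ℝ) < 1)
  exact hP.two_zpow_le_of_forall_abs_le hn hdeg ((abs_pos.2 hPx).trans_le (hle x hx)) hle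
end

section
/- Let n ≥ 1 be an integer, and let P be a monic real polynomial of degree n such that max_{x∈[−1,1]} |P(x)| ≤ 2^{1−n}. Then P = 2^{1−n}·T_n, where T_n is the n-th Chebyshev polynomial of the first kind. -/
open Set Polynomial Nat MeasureTheory ENNReal

theorem Polynomial.Chebyshev.eq_two_zpow_smul_T_of_forall_abs_le {n : ℕ} (hn : 1 ≤ n)
    {P : ℝ[X]} (hP : P.Monic) (hdeg : P.natDegree = n)
    (hbound : ∀ x ∈ Icc (-1 : ℝ) 1, |P.eval x| ≤ (2 : ℝ) ^ (1 - (n : ℤ))) :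
    P = (2 : ℝ) ^ (1 - (n : ℤ)) • T ℝ n := by
  set c : ℝ := (2 : ℝ) ^ (1 - (n : ℤ))
  have hc : 0 < c := by positivity
  have hc_inv : c⁻¹ = 2 ^ (n - 1) := by
    rw [← zpow_neg, neg_sub, show (n : ℤ) - 1 = ((n - 1 : ℕ) : ℤ) by omega, zpow_natCast]
  -- `c⁻¹ • P` is the equality case of Chebyshev's bound `2 ^ (n - 1)` on the `n`-th coefficient.
  suffices c⁻¹ • P = T ℝ n by rw [← this, smul_inv_smul₀ hc.ne']
  refine (coeff_eq_iff_of_forall_abs_le_one ?_ fun x hx => ?_).mp ?_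
  · exact (degree_smul_le _ _).trans (hdeg ▸ degree_le_natDegree)
  · rw [eval_smul, smul_eq_mul, abs_mul, abs_of_pos (inv_pos.mpr hc), ← inv_mul_cancel₀ hc.ne']
    exact mul_le_mul_of_nonneg_left (hbound x hx) (inv_pos.mpr hc).le
  · rw [coeff_smul, ← hdeg, hP.coeff_natDegree, smul_eq_mul, mul_one, hc_inv, hdeg]

/-- A monic polynomial of degree `n ≥ 1` with `max_{x ∈ [-1,1]} |P(x)| ≤ 2^{1-n}` must be
`2^{1-n} Tₙ`, where `Tₙ` is the `n`-th Chebyshev polynomial of the first kind. -/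
theorem stmt8 (n : ℕ) (hn : 1 ≤ n) (P : Polynomial ℝ) (hP : P.Monic) (hdeg : P.natDegree = n)
    (hbound : sSup ((fun x => |P.eval x|) '' Set.Icc (-1:ℝ) 1) ≤ (2:ℝ) ^ (1 - (n:ℤ))) :
    P = (2:ℝ) ^ (1 - (n:ℤ)) • Polynomial.Chebyshev.T ℝ n := by
  refine Chebyshev.eq_two_zpow_smul_T_of_forall_abs_le hn hP hdeg fun x hx => ?_
  have hbdd := isCompact_Icc.bddAbove_image (P.continuous.abs.continuousOn (s := Icc (-1) 1))
  exact (le_csSup hbdd ⟨x, hx, rfl⟩).trans hbound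
end

section
/- Let n ≥ 1 be an integer. Then the minimum of ∫_{−1}^1 P(t)² dt over all monic real polynomials P of degree n equals 2^{2n+1}·(n!)⁴ / ((2n)!² · (2n+1)), and it is attained by the polynomial (n!/(2n)!) · dⁿ/dxⁿ[(x²−1)ⁿ] (the monic multiple of the n-th Legendre polynomial). -/
open Set Polynomial Nat MeasureTheory ENNReal

/-!
Write a monic `Q` of degree `n` as `Q = L + R` with `L = n!/(2n)! · Dⁿ (X² - 1)ⁿ` and `deg R < n`.
Since `±1` are roots of order `n` of `(X² - 1)ⁿ`, `n` integrations by parts on `[-1, 1]` have no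
boundary terms and give `∫ R · Dⁿ (X² - 1)ⁿ = ± ∫ Dⁿ R · (X² - 1)ⁿ = 0`, so
`∫ Q² = ∫ L² + ∫ R² ≥ ∫ L²`. The same integration by parts gives
`∫ (Dⁿ (X² - 1)ⁿ)² = (2n)! ∫ (1 - t²)ⁿ`, and `Iₙ = ∫ (1 - t²)ⁿ` satisfies
`(2n + 3) Iₙ₊₁ = (2n + 2) Iₙ`, whence `Iₙ = 2^(2n+1) (n!)² / (2n+1)!`.
-/

open intervalIntegral

theorem integral_one_sub_sq_pow_succ (n : ℕ) :
    (2 * n + 3 : ℝ) * ∫ t in (-1 : ℝ)..1, (1 - t ^ 2) ^ (n + 1) =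
      (2 * n + 2) * ∫ t in (-1 : ℝ)..1, (1 - t ^ 2) ^ n := by
  have hderiv (x : ℝ) : HasDerivAt (fun t : ℝ => t * (1 - t ^ 2) ^ (n + 1))
      ((2 * n + 3) * (1 - x ^ 2) ^ (n + 1) - (2 * n + 2) * (1 - x ^ 2) ^ n) x := by
    refine ((hasDerivAt_id' x).fun_mul
      (((hasDerivAt_pow 2 x).const_sub 1).fun_pow (n + 1))).congr_deriv ?_
    push_cast
    ring
  have hftc := integral_eq_sub_of_hasDerivAt (fun x _ => hderiv x)
    (Continuous.intervalIntegrable (by fun_prop) (-1) 1)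
  rw [integral_sub (Continuous.intervalIntegrable (by fun_prop) _ _)
      (Continuous.intervalIntegrable (by fun_prop) _ _),
    intervalIntegral.integral_const_mul, intervalIntegral.integral_const_mul] at hftc
  norm_num at hftc
  linarith

theorem integral_one_sub_sq_pow (n : ℕ) :
    ∫ t in (-1 : ℝ)..1, (1 - t ^ 2) ^ n = 2 ^ (2 * n + 1) * (n ! : ℝ) ^ 2 / (2 * n + 1)! := by
  induction n with
  | zero => norm_num
  | succ n ih =>
    have hrec := integral_one_sub_sq_pow_succ n
    rw [ih] at hrec
    have hfact : (2 * (n + 1) + 1)! = (2 * n + 3) * ((2 * n + 2) * (2 * n + 1)!) :=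
      Nat.factorial_succ _ ▸ Nat.factorial_succ _ ▸ rfl
    rw [hfact, Nat.factorial_succ, _root_.eq_div_iff (by positivity)]
    rw [mul_div_assoc', _root_.eq_div_iff (by positivity)] at hrec
    push_cast at hrec ⊢
    linear_combination (2 * (n : ℝ) + 2) * hrec

theorem integral_sq_le_integral_add_sq {f g : ℝ → ℝ} {a b : ℝ} (hab : a ≤ b) (hf : Continuous f)
    (hg : Continuous g) (horth : ∫ t in a..b, f t * g t = 0) :
    ∫ t in a..b, f t ^ 2 ≤ ∫ t in a..b, (f t + g t) ^ 2 := by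
  have hexpand : ∫ t in a..b, (f t + g t) ^ 2 =
      (∫ t in a..b, f t ^ 2) + 2 * (∫ t in a..b, f t * g t) + ∫ t in a..b, g t ^ 2 := by
    simp only [add_sq, mul_assoc]
    rw [integral_add (Continuous.intervalIntegrable (by fun_prop) _ _)
        (Continuous.intervalIntegrable (by fun_prop) _ _),
      integral_add (Continuous.intervalIntegrable (by fun_prop) _ _)
        (Continuous.intervalIntegrable (by fun_prop) _ _),
      intervalIntegral.integral_const_mul]
  have hg2 : 0 ≤ ∫ t in a..b, g t ^ 2 := integral_nonneg hab fun t _ => sq_nonneg (g t)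
  rw [hexpand, horth]
  linarith

namespace Polynomial

theorem integral_eval_mul_eval_derivative (p q : ℝ[X]) (a b : ℝ) :
    ∫ t in a..b, p.eval t * (derivative q).eval t =
      p.eval b * q.eval b - p.eval a * q.eval a - ∫ t in a..b, (derivative p).eval t * q.eval t :=
  integral_mul_deriv_eq_deriv_mul (fun x _ => p.hasDerivAt x) (fun x _ => q.hasDerivAt x)
    ((derivative p).continuous.intervalIntegrable a b)
    ((derivative q).continuous.intervalIntegrable a b)

theorem integral_eval_mul_eval_iterate_derivative {q : ℝ[X]} {a b : ℝ} {n : ℕ}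
    (ha : ∀ k < n, (derivative^[k] q).eval a = 0) (hb : ∀ k < n, (derivative^[k] q).eval b = 0)
    (p : ℝ[X]) :
    ∫ t in a..b, p.eval t * (derivative^[n] q).eval t =
      (-1) ^ n * ∫ t in a..b, (derivative^[n] p).eval t * q.eval t := by
  induction n generalizing p with
  | zero => simp
  | succ n ih =>
    rw [Function.iterate_succ_apply', integral_eval_mul_eval_derivative, ha n n.lt_succ_self,
      hb n n.lt_succ_self, ih (fun k hk => ha k (by omega)) (fun k hk => hb k (by omega)),
      ← Function.iterate_succ_apply]
    ring

theorem eval_iterate_derivative_eq_zero_of_pow_dvd {R : Type*} [CommRing R] {p : R[X]} {a : R}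
    {n k : ℕ} (h : (X - C a) ^ n ∣ p) (hk : k < n) : (derivative^[k] p).eval a = 0 :=
  dvd_iff_isRoot.mp <| (dvd_pow_self _ (Nat.sub_ne_zero_of_lt hk)).trans
    (pow_sub_dvd_iterate_derivative_of_pow_dvd k h)

theorem Monic.iterate_derivative_natDegree_s10 {R : Type*} [CommRing R] {p : R[X]} (hp : p.Monic) :
    derivative^[p.natDegree] p = C (p.natDegree ! : R) := by
  rw [eq_C_of_natDegree_le_zero ((natDegree_iterate_derivative _ _).trans (by omega)),
    coeff_iterate_derivative, zero_add, Nat.descFactorial_self, hp.coeff_natDegree, nsmul_one]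

section Rodrigues

variable {R : Type*} [CommRing R]

theorem X_sq_sub_one_pow_eq (n : ℕ) :
    ((X : R[X]) ^ 2 - 1) ^ n = (X - C 1) ^ n * (X - C (-1)) ^ n := by
  rw [← mul_pow]
  congr 1
  simp only [map_one, map_neg]
  ring

theorem monic_X_sq_sub_one_pow [Nontrivial R] (n : ℕ) : (((X : R[X]) ^ 2 - 1) ^ n).Monic := by
  simpa only [map_one] using (monic_X_pow_sub_C (1 : R) two_ne_zero).pow n

theorem natDegree_X_sq_sub_one_pow [Nontrivial R] (n : ℕ) :
    (((X : R[X]) ^ 2 - 1) ^ n).natDegree = 2 * n := by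
  rw [← C_1, (monic_X_pow_sub_C (1 : R) two_ne_zero).natDegree_pow, natDegree_X_pow_sub_C,
    mul_comm]

theorem eval_iterate_derivative_X_sq_sub_one_pow_eq_zero {n k : ℕ} (hk : k < n) {a : R}
    (ha : a = 1 ∨ a = -1) : (derivative^[k] (((X : R[X]) ^ 2 - 1) ^ n)).eval a = 0 := by
  rw [X_sq_sub_one_pow_eq]
  rcases ha with rfl | rfl
  · exact eval_iterate_derivative_eq_zero_of_pow_dvd (dvd_mul_right _ _) hk
  · exact eval_iterate_derivative_eq_zero_of_pow_dvd (dvd_mul_left _ _) hk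

theorem integral_eval_mul_eval_iterate_derivative_X_sq_sub_one_pow (n : ℕ) (p : ℝ[X]) :
    ∫ t in (-1)..1, p.eval t * (derivative^[n] ((X ^ 2 - 1) ^ n)).eval t =
      (-1) ^ n * ∫ t in (-1)..1, (derivative^[n] p).eval t * (t ^ 2 - 1) ^ n := by
  rw [integral_eval_mul_eval_iterate_derivative
    (fun k hk => eval_iterate_derivative_X_sq_sub_one_pow_eq_zero hk (.inr rfl))
    (fun k hk => eval_iterate_derivative_X_sq_sub_one_pow_eq_zero hk (.inl rfl))]
  simp only [eval_pow, eval_sub, eval_X, eval_one]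

theorem integral_eval_mul_eval_iterate_derivative_X_sq_sub_one_pow_eq_zero {n : ℕ} {p : ℝ[X]}
    (hp : p.degree < n) :
    ∫ t in (-1)..1, p.eval t * (derivative^[n] ((X ^ 2 - 1) ^ n)).eval t = 0 := by
  simp [integral_eval_mul_eval_iterate_derivative_X_sq_sub_one_pow,
    iterate_derivative_eq_zero_of_degree_lt hp]

theorem coeff_iterate_derivative_X_sq_sub_one_pow_self [Nontrivial R] (n : ℕ) :
    (derivative^[n] (((X : R[X]) ^ 2 - 1) ^ n)).coeff n = ((2 * n).descFactorial n : R) := by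
  rw [coeff_iterate_derivative, ← two_mul, ← natDegree_X_sq_sub_one_pow (R := R) n,
    (monic_X_sq_sub_one_pow n).coeff_natDegree, natDegree_X_sq_sub_one_pow, nsmul_one]

theorem iterate_derivative_two_mul_X_sq_sub_one_pow [Nontrivial R] (n : ℕ) :
    derivative^[2 * n] (((X : R[X]) ^ 2 - 1) ^ n) = C ((2 * n)! : R) := by
  simpa only [natDegree_X_sq_sub_one_pow] using
    (monic_X_sq_sub_one_pow (R := R) n).iterate_derivative_natDegree_s10

end Rodrigues

theorem integral_eval_iterate_derivative_X_sq_sub_one_pow_sq (n : ℕ) :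
    ∫ t in (-1 : ℝ)..1, (derivative^[n] ((X ^ 2 - 1) ^ n : ℝ[X])).eval t ^ 2 =
      (2 * n)! * ∫ t in (-1 : ℝ)..1, (1 - t ^ 2) ^ n := by
  have hsign (t : ℝ) : (t ^ 2 - 1) ^ n = (-1) ^ n * (1 - t ^ 2) ^ n := by
    rw [← mul_pow]; ring
  have hsq : ((-1 : ℝ) ^ n) ^ 2 = 1 := by rw [← pow_mul, mul_comm, pow_mul, neg_one_sq, one_pow]
  simp only [sq (eval _ _), integral_eval_mul_eval_iterate_derivative_X_sq_sub_one_pow,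
    ← Function.iterate_add_apply, ← two_mul, iterate_derivative_two_mul_X_sq_sub_one_pow, eval_C,
    hsign, ← mul_assoc, mul_comm _ ((-1 : ℝ) ^ n), intervalIntegral.integral_const_mul]
  linear_combination ((2 * n)! * ∫ t in (-1 : ℝ)..1, (1 - t ^ 2) ^ n) * hsq

noncomputable def monicLegendre (n : ℕ) : ℝ[X] :=
  ((n ! : ℝ) / (2 * n)!) • derivative^[n] ((X ^ 2 - 1) ^ n)

theorem natDegree_monicLegendre_le (n : ℕ) : (monicLegendre n).natDegree ≤ n :=
  (natDegree_smul_le _ _).trans <| (natDegree_iterate_derivative _ _).trans <| by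
    rw [natDegree_X_sq_sub_one_pow]; omega

theorem coeff_monicLegendre_self (n : ℕ) : (monicLegendre n).coeff n = 1 := by
  have hfact : n ! * (2 * n).descFactorial n = (2 * n)! := by
    simpa [show 2 * n - n = n by omega] using
      (2 * n).factorial_mul_descFactorial (by omega : n ≤ 2 * n)
  rw [monicLegendre, coeff_smul, coeff_iterate_derivative_X_sq_sub_one_pow_self, smul_eq_mul,
    div_mul_eq_mul_div, div_eq_one_iff_eq (by positivity)]
  exact_mod_cast hfact

theorem monic_monicLegendre (n : ℕ) : (monicLegendre n).Monic :=
  monic_of_natDegree_le_of_coeff_eq_one n (natDegree_monicLegendre_le n)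
    (coeff_monicLegendre_self n)

theorem natDegree_monicLegendre (n : ℕ) : (monicLegendre n).natDegree = n :=
  natDegree_eq_of_le_of_coeff_ne_zero (natDegree_monicLegendre_le n)
    (by rw [coeff_monicLegendre_self]; exact one_ne_zero)

theorem integral_monicLegendre_sq (n : ℕ) :
    ∫ t in (-1 : ℝ)..1, (monicLegendre n).eval t ^ 2 =
      2 ^ (2 * n + 1) * (n ! : ℝ) ^ 4 / ((2 * n)! ^ 2 * (2 * n + 1)) := by
  simp only [monicLegendre, eval_smul, smul_eq_mul, mul_pow, intervalIntegral.integral_const_mul,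
    integral_eval_iterate_derivative_X_sq_sub_one_pow_sq, integral_one_sub_sq_pow,
    Nat.factorial_succ (2 * n)]
  have h2n : ((2 * n)! : ℝ) ≠ 0 := by positivity
  push_cast
  field_simp

theorem integral_eval_mul_eval_monicLegendre_eq_zero {n : ℕ} {p : ℝ[X]} (hp : p.degree < n) :
    ∫ t in (-1 : ℝ)..1, p.eval t * (monicLegendre n).eval t = 0 := by
  simp only [monicLegendre, eval_smul, smul_eq_mul, mul_left_comm (p.eval _),
    intervalIntegral.integral_const_mul,
    integral_eval_mul_eval_iterate_derivative_X_sq_sub_one_pow_eq_zero hp, mul_zero]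

theorem integral_monicLegendre_sq_le {n : ℕ} {Q : ℝ[X]} (hQ : Q.Monic) (hQn : Q.natDegree = n) :
    ∫ t in (-1 : ℝ)..1, (monicLegendre n).eval t ^ 2 ≤ ∫ t in (-1 : ℝ)..1, Q.eval t ^ 2 := by
  have hQdeg : Q.degree = n := by rw [degree_eq_natDegree hQ.ne_zero, hQn]
  have hdeg : (Q - monicLegendre n).degree < n := hQdeg ▸ degree_sub_lt_left
    (by rw [hQdeg, degree_eq_natDegree (monic_monicLegendre n).ne_zero, natDegree_monicLegendre])
    hQ.ne_zero (by rw [hQ.leadingCoeff, (monic_monicLegendre n).leadingCoeff])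
  simpa using integral_sq_le_integral_add_sq (by norm_num) (monicLegendre n).continuous
    (Q - monicLegendre n).continuous
    (by simpa only [mul_comm] using integral_eval_mul_eval_monicLegendre_eq_zero hdeg)

end Polynomial

theorem stmt10_general (n : ℕ) :
    (∀ Q : Polynomial ℝ, Q.Monic → Q.natDegree = n →
      2 ^ (2 * n + 1) * (n ! : ℝ) ^ 4 / (((2 * n)! : ℝ) ^ 2 * (2 * n + 1)) ≤
        ∫ t in (-1:ℝ)..1, (Q.eval t) ^ 2) ∧
    (((n ! : ℝ) / ((2 * n)! : ℝ)) • (Polynomial.derivative^[n]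
        (((X : Polynomial ℝ) ^ 2 - 1) ^ n))).Monic ∧
    (((n ! : ℝ) / ((2 * n)! : ℝ)) • (Polynomial.derivative^[n]
        (((X : Polynomial ℝ) ^ 2 - 1) ^ n))).natDegree = n ∧
    (∫ t in (-1:ℝ)..1, ((((n ! : ℝ) / ((2 * n)! : ℝ)) • (Polynomial.derivative^[n]
        (((X : Polynomial ℝ) ^ 2 - 1) ^ n))).eval t) ^ 2) =
      2 ^ (2 * n + 1) * (n ! : ℝ) ^ 4 / (((2 * n)! : ℝ) ^ 2 * (2 * n + 1)) :=
  ⟨fun _ hQ hQn =>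
    (integral_monicLegendre_sq n).symm.le.trans (integral_monicLegendre_sq_le hQ hQn),
    monic_monicLegendre n, natDegree_monicLegendre n, integral_monicLegendre_sq n⟩

/-- The minimum of `∫_{-1}^1 P(t)² dt` over monic polynomials of degree `n` is
`2^{2n+1} (n!)⁴ / ((2n)!² (2n+1))`, attained by the monic multiple
`(n!/(2n)!) · dⁿ/dxⁿ (x²-1)ⁿ` of the `n`-th Legendre polynomial. -/
theorem stmt10 (n : ℕ) (hn : 1 ≤ n) :
    (∀ Q : Polynomial ℝ, Q.Monic → Q.natDegree = n →
      2 ^ (2 * n + 1) * (n ! : ℝ) ^ 4 / (((2 * n)! : ℝ) ^ 2 * (2 * n + 1)) ≤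
        ∫ t in (-1:ℝ)..1, (Q.eval t) ^ 2) ∧
    (((n ! : ℝ) / ((2 * n)! : ℝ)) • (Polynomial.derivative^[n]
        (((X : Polynomial ℝ) ^ 2 - 1) ^ n))).Monic ∧
    (((n ! : ℝ) / ((2 * n)! : ℝ)) • (Polynomial.derivative^[n]
        (((X : Polynomial ℝ) ^ 2 - 1) ^ n))).natDegree = n ∧
    (∫ t in (-1:ℝ)..1, ((((n ! : ℝ) / ((2 * n)! : ℝ)) • (Polynomial.derivative^[n]
        (((X : Polynomial ℝ) ^ 2 - 1) ^ n))).eval t) ^ 2) =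
      2 ^ (2 * n + 1) * (n ! : ℝ) ^ 4 / (((2 * n)! : ℝ) ^ 2 * (2 * n + 1)) :=
  stmt10_general n
end
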